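/- arXiv:1905.09705 — 10 statements merged into one kernel-verified Lean document; each statement's English description precedes it below -/
import Mathlib

section
/- Let V be a real vector space equipped with a seminorm N (so N(x+y) ≤ N(x)+N(y) and N(c·x) = |c|·N(x)), let L : V → V be any map, and let Δt_FE ≥ 0. Assume the forward Euler method is strongly stable with respect to N: N(v + τ·L(v)) ≤ N(v) for every v ∈ V and every τ with 0 ≤ τ ≤ Δt_FE. Let s ≥ 1 and let real coefficients α_{iν}, β_{iν} ≥ 0 (for 1 ≤ i ≤ s, 0 ≤ ν ≤ i−1) satisfy the consistency condition Σ_{ν=0}^{i−1} α_{iν} = 1 for every i. Let Δt ≥ 0 satisfy Δt·β_{iν} ≤ Δt_FE·α_{iν} for all i, ν (i.e. the modified CFL condition Δt ≤ 𝒞·Δt_FE with SSP coefficient 𝒞 = min_{i,ν} α_{iν}/β_{iν}). Then the SSP-RK stages defined by U^(0) = u and U^(i) = Σ_{ν=0}^{i−1} ( α_{iν}·U^(ν) + Δt·β_{iν}·L(U^(ν)) ) for i = 1,…,s satisfy N(U^(i)) ≤ N(u) for every 0 ≤ i ≤ s; in particular N(U^(s)) ≤ N(u). -/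
/-!
Each stage is a convex combination, with weights `α i ν`, of the forward Euler steps
`U ν + (Δt β i ν / α i ν) L (U ν)`, whose step sizes obey the forward Euler restriction by
the CFL condition. Subadditivity and homogeneity of `N` then bound `N (U i)` by the convex
combination of the `N (U ν)`, and strong induction on the stage index finishes.
-/

open Finset

section ForwardEuler

variable {V : Type*} [AddCommGroup V] [Module ℝ V] {N : V → ℝ} {L : V → V} {ΔtFE : ℝ}

theorem forwardEuler_smul_add_le
    (hN_smul : ∀ (c : ℝ) (x : V), N (c • x) = |c| * N x)
    (hFE : ∀ (v : V) (τ : ℝ), 0 ≤ τ → τ ≤ ΔtFE → N (v + τ • L v) ≤ N v)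
    {a b : ℝ} (ha : 0 ≤ a) (hb : 0 ≤ b) (hab : b ≤ ΔtFE * a) (v : V) :
    N (a • v + b • L v) ≤ a * N v := by
  rcases ha.eq_or_lt with rfl | ha_pos
  · have hb0 : b = 0 := le_antisymm (by simpa using hab) hb
    simpa [hb0] using (hN_smul 0 0).le
  · have hstep : a • v + b • L v = a • (v + (b / a) • L v) := by
      rw [smul_add, smul_smul, mul_div_cancel₀ _ ha_pos.ne']
    rw [hstep, hN_smul, abs_of_nonneg ha]
    exact mul_le_mul_of_nonneg_left
      (hFE v _ (div_nonneg hb ha) ((div_le_iff₀ ha_pos).2 hab)) ha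

theorem sum_forwardEuler_le {ι : Type*}
    (hN_add : ∀ x y : V, N (x + y) ≤ N x + N y)
    (hN_smul : ∀ (c : ℝ) (x : V), N (c • x) = |c| * N x)
    (hFE : ∀ (v : V) (τ : ℝ), 0 ≤ τ → τ ≤ ΔtFE → N (v + τ • L v) ≤ N v)
    (t : Finset ι) (a b : ι → ℝ) (v : ι → V)
    (ha : ∀ ν ∈ t, 0 ≤ a ν) (hb : ∀ ν ∈ t, 0 ≤ b ν) (hab : ∀ ν ∈ t, b ν ≤ ΔtFE * a ν) :
    N (∑ ν ∈ t, (a ν • v ν + b ν • L (v ν))) ≤ ∑ ν ∈ t, a ν * N (v ν) := by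
  have hN_zero : N 0 = 0 := by simpa using hN_smul 0 0
  calc N (∑ ν ∈ t, (a ν • v ν + b ν • L (v ν)))
      ≤ ∑ ν ∈ t, N (a ν • v ν + b ν • L (v ν)) :=
        le_sum_of_subadditive N hN_zero.le hN_add _ _
    _ ≤ ∑ ν ∈ t, a ν * N (v ν) := sum_le_sum fun ν hν =>
        forwardEuler_smul_add_le hN_smul hFE (ha ν hν) (hb ν hν) (hab ν hν) _

end ForwardEuler

theorem ssp_rk_strong_stability_general
    {V : Type*} [AddCommGroup V] [Module ℝ V]
    (N : V → ℝ)
    (hN_add : ∀ x y : V, N (x + y) ≤ N x + N y)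
    (hN_smul : ∀ (c : ℝ) (x : V), N (c • x) = |c| * N x)
    (L : V → V) (ΔtFE : ℝ)
    (hFE : ∀ (v : V) (τ : ℝ), 0 ≤ τ → τ ≤ ΔtFE → N (v + τ • L v) ≤ N v)
    (s : ℕ)
    (α β : ℕ → ℕ → ℝ)
    (hα : ∀ i ν, 1 ≤ i → i ≤ s → ν < i → 0 ≤ α i ν)
    (hβ : ∀ i ν, 1 ≤ i → i ≤ s → ν < i → 0 ≤ β i ν)
    (hconsist : ∀ i, 1 ≤ i → i ≤ s → (∑ ν ∈ Finset.range i, α i ν) = 1)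
    (Δt : ℝ) (hΔt : 0 ≤ Δt)
    (hCFL : ∀ i ν, 1 ≤ i → i ≤ s → ν < i → Δt * β i ν ≤ ΔtFE * α i ν)
    (u : V) (U : ℕ → V) (hU0 : U 0 = u)
    (hU : ∀ i, 1 ≤ i → i ≤ s →
      U i = ∑ ν ∈ Finset.range i, (α i ν • U ν + (Δt * β i ν) • L (U ν))) :
    ∀ i ≤ s, N (U i) ≤ N u := by
  intro i
  induction i using Nat.strong_induction_on with
  | _ i ih =>
    intro hi
    rcases Nat.eq_zero_or_pos i with rfl | hpos
    · rw [hU0]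
    have hα' : ∀ ν ∈ range i, 0 ≤ α i ν := fun ν hν => hα i ν hpos hi (mem_range.1 hν)
    calc N (U i) ≤ ∑ ν ∈ range i, α i ν * N (U ν) := by
          rw [hU i hpos hi]
          exact sum_forwardEuler_le hN_add hN_smul hFE _ _ _ _ hα'
            (fun ν hν => mul_nonneg hΔt (hβ i ν hpos hi (mem_range.1 hν)))
            (fun ν hν => hCFL i ν hpos hi (mem_range.1 hν))
      _ ≤ ∑ ν ∈ range i, α i ν * N u := sum_le_sum fun ν hν =>
          mul_le_mul_of_nonneg_left
            (ih ν (mem_range.1 hν) ((mem_range.1 hν).le.trans hi)) (hα' ν hν)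
      _ = N u := by rw [← sum_mul, hconsist i hpos hi, one_mul]

/-- SSP-RK strong stability: if forward Euler is strongly stable w.r.t. a seminorm `N`
under the step restriction `τ ≤ ΔtFE`, and the Shu–Osher coefficients are nonnegative
with row sums one, then under the modified CFL condition `Δt * β i ν ≤ ΔtFE * α i ν`
every Runge–Kutta stage satisfies `N (U i) ≤ N u`. -/
theorem ssp_rk_strong_stability
    {V : Type*} [AddCommGroup V] [Module ℝ V]
    (N : V → ℝ)
    (hN_add : ∀ x y : V, N (x + y) ≤ N x + N y)
    (hN_smul : ∀ (c : ℝ) (x : V), N (c • x) = |c| * N x)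
    (L : V → V) (ΔtFE : ℝ) (hΔtFE : 0 ≤ ΔtFE)
    (hFE : ∀ (v : V) (τ : ℝ), 0 ≤ τ → τ ≤ ΔtFE → N (v + τ • L v) ≤ N v)
    (s : ℕ) (hs : 1 ≤ s)
    (α β : ℕ → ℕ → ℝ)
    (hα : ∀ i ν, 1 ≤ i → i ≤ s → ν < i → 0 ≤ α i ν)
    (hβ : ∀ i ν, 1 ≤ i → i ≤ s → ν < i → 0 ≤ β i ν)
    (hconsist : ∀ i, 1 ≤ i → i ≤ s → (∑ ν ∈ Finset.range i, α i ν) = 1)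
    (Δt : ℝ) (hΔt : 0 ≤ Δt)
    (hCFL : ∀ i ν, 1 ≤ i → i ≤ s → ν < i → Δt * β i ν ≤ ΔtFE * α i ν)
    (u : V) (U : ℕ → V) (hU0 : U 0 = u)
    (hU : ∀ i, 1 ≤ i → i ≤ s →
      U i = ∑ ν ∈ Finset.range i, (α i ν • U ν + (Δt * β i ν) • L (U ν))) :
    ∀ i ≤ s, N (U i) ≤ N u :=
  ssp_rk_strong_stability_general N hN_add hN_smul L ΔtFE hFE s α β hα hβ hconsist Δt hΔt hCFL u U
    hU0 hU
end

section
/- Let Δx₀ > 0, Δx₁ > 0 be the widths of the interface cell and the adjacent fine cell, let Δt ∈ ℝ, let M ≥ 1 be an integer, and let real numbers H_{p,ν} for 0 ≤ p ≤ M−1 and ν ∈ {0,1} be given (the interface numerical fluxes at substep p, Runge–Kutta stage ν). Define the fine-cell means v₀, v₁, …, v_M by the SSP-RK(2,2) local steps with zero flux at the fine cell's outer edge: v_p^{(1)} = v_p + (Δt/(M·Δx₁))·H_{p,0} and v_{p+1} = (1/2)·v_p + (1/2)·( v_p^{(1)} + (Δt/(M·Δx₁))·H_{p,1} ). Define the interface-cell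 mean w¹ by the flux-accumulating corrector with zero flux at the interface cell's outer edge: ŵ^{(1)} = w⁰ − (Δt/(M·Δx₀))·Σ_{p=0}^{M−1} H_{p,0} and w¹ = (1/2)·w⁰ + (1/2)·( ŵ^{(1)} − (Δt/(M·Δx₀))·Σ_{p=0}^{M−1} H_{p,1} ). Then total mass is exactly conserved: Δx₀·w¹ + Δx₁·v_M = Δx₀·w⁰ + Δx₁·v₀. -/
/-!
Over one substep the Heun update raises the fine-cell mean by `Δt/(M Δx₁)` times the
stage-averaged flux `(H_{p,0} + H_{p,1})/2`, so `v_M - v₀` telescopes to the sum of these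
averages. The corrector lowers the interface-cell mean by `Δt/(M Δx₀)` times the same sum.
Multiplied by the cell widths both changes become `± Δt/M` times that sum and cancel.
-/

open Finset

lemma mul_div_mul_cancel_right_of_ne_zero {c : ℝ} (a b : ℝ) (hc : c ≠ 0) :
    c * (a / (b * c)) = a / b := by
  rw [mul_div_assoc', mul_comm c a, mul_div_mul_right _ _ hc]

lemma ssprk22_substeps_eq_add_sum (k : ℝ) (M : ℕ) (H : ℕ → ℕ → ℝ) (v v1 : ℕ → ℝ)
    (hv1 : ∀ p < M, v1 p = v p + k * H p 0)
    (hv : ∀ p < M, v (p + 1) = (1/2) * v p + (1/2) * (v1 p + k * H p 1)) :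
    v M = v 0 + k * ∑ p ∈ range M, (H p 0 + H p 1) / 2 := by
  have step : ∀ p ∈ range M, v (p + 1) - v p = k * ((H p 0 + H p 1) / 2) := by
    intro p hp
    rw [hv p (mem_range.1 hp), hv1 p (mem_range.1 hp)]
    ring
  rw [mul_sum, ← sum_congr rfl step, sum_range_sub]
  ring

lemma sum_stage_average (M : ℕ) (H : ℕ → ℕ → ℝ) :
    ∑ p ∈ range M, (H p 0 + H p 1) / 2
      = ((∑ p ∈ range M, H p 0) + ∑ p ∈ range M, H p 1) / 2 := by
  rw [← sum_add_distrib, sum_div]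

theorem lts_rk22_mass_conservation_general
    (Δx0 Δx1 : ℝ) (hΔx0 : 0 < Δx0) (hΔx1 : 0 < Δx1)
    (Δt : ℝ) (M : ℕ)
    (H : ℕ → ℕ → ℝ)
    (v v1 : ℕ → ℝ)
    (hv1 : ∀ p < M, v1 p = v p + (Δt / (M * Δx1)) * H p 0)
    (hv : ∀ p < M,
      v (p + 1) = (1/2) * v p + (1/2) * (v1 p + (Δt / (M * Δx1)) * H p 1))
    (w0 w1 what1 : ℝ)
    (hwhat1 : what1 = w0 - (Δt / (M * Δx0)) * ∑ p ∈ Finset.range M, H p 0)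
    (hw1 : w1 = (1/2) * w0 +
      (1/2) * (what1 - (Δt / (M * Δx0)) * ∑ p ∈ Finset.range M, H p 1)) :
    Δx0 * w1 + Δx1 * v M = Δx0 * w0 + Δx1 * v 0 := by
  have interface_mass := mul_div_mul_cancel_right_of_ne_zero Δt (M : ℝ) hΔx0.ne'
  have fine_mass := mul_div_mul_cancel_right_of_ne_zero Δt (M : ℝ) hΔx1.ne'
  rw [hw1, hwhat1, ssprk22_substeps_eq_add_sum _ M H v v1 hv1 hv, sum_stage_average]
  linear_combination
    ((∑ p ∈ range M, H p 0) + ∑ p ∈ range M, H p 1) / 2 * (fine_mass - interface_mass)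

/-- Exact mass conservation of the second-order LTS corrector based on SSP-RK(2,2):
the fine cell (width `Δx1`) is advanced with `M` substeps of size `Δt/M` receiving the
interface fluxes `H p ν`, while the interface cell (width `Δx0`) takes one coarse step
using the accumulated fluxes; total mass `Δx0 * w + Δx1 * v` is conserved. -/
theorem lts_rk22_mass_conservation
    (Δx0 Δx1 : ℝ) (hΔx0 : 0 < Δx0) (hΔx1 : 0 < Δx1)
    (Δt : ℝ) (M : ℕ) (hM : 1 ≤ M)
    (H : ℕ → ℕ → ℝ)
    (v v1 : ℕ → ℝ)
    (hv1 : ∀ p < M, v1 p = v p + (Δt / (M * Δx1)) * H p 0)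
    (hv : ∀ p < M,
      v (p + 1) = (1/2) * v p + (1/2) * (v1 p + (Δt / (M * Δx1)) * H p 1))
    (w0 w1 what1 : ℝ)
    (hwhat1 : what1 = w0 - (Δt / (M * Δx0)) * ∑ p ∈ Finset.range M, H p 0)
    (hw1 : w1 = (1/2) * w0 +
      (1/2) * (what1 - (Δt / (M * Δx0)) * ∑ p ∈ Finset.range M, H p 1)) :
    Δx0 * w1 + Δx1 * v M = Δx0 * w0 + Δx1 * v 0 :=
  lts_rk22_mass_conservation_general Δx0 Δx1 hΔx0 hΔx1 Δt M H v v1 hv1 hv w0 w1 what1 hwhat1 hw1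
end

section
/- Let s ≥ 1 and let real coefficients α_{iν}, β_{iν} (for 1 ≤ i ≤ s, 0 ≤ ν ≤ i−1) satisfy Σ_{ν=0}^{i−1} α_{iν} = 1 for every i. Let Δx₀ > 0, Δx₁ > 0, Δt ∈ ℝ, let M ≥ 1 be an integer, and let real numbers H_{p,ν} for 0 ≤ p ≤ M−1 and 0 ≤ ν ≤ s−1 be given (the interface numerical fluxes). Define the fine-cell means v₀, …, v_M by: for each p, stages v_p^{(0)} = v_p, v_p^{(i)} = Σ_{ν=0}^{i−1} ( α_{iν}·v_p^{(ν)} + β_{iν}·(Δt/(M·Δx₁))·H_{p,ν} ) for i = 1,…,s, and v_{p+1} = v_p^{(s)}. Define the interface-cell mean by the corrector: ŵ^{(0)} = w⁰, ŵ^{(i)} = Σ_{ν=0}^{i−1} ( α_{iν}·ŵ^{(ν)} − β_{iν}·(Δt/(M·Δx₀))·Σ_{p=0}^{M−1} H_{p,ν} ) for i = 1,…,s, and w¹ = ŵ^{(s)}. Then total mass is exactly conserved: Δx₀·w¹ + Δx₁·v_M = Δx₀·w⁰ + Δx₁·v₀. -/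
/-!
Weighting the interface cell by `Δx₀` and the fine cells by `Δx₁`, the total mass of the
stage values obeys the flux-free Shu–Osher recursion: at each stage the `M` fine-cell flux
contributions, each scaled by `Δt / (M Δx₁)`, cancel exactly against the averaged flux
`Δt / (M Δx₀) ∑ₚ H p ν` removed from the interface cell. A Shu–Osher recursion with no
increment and rows of `α` summing to `1` keeps every stage equal to the initial one, so the
stage-`s` mass equals the stage-`0` mass; summing the substeps telescopes the fine cell
from `v 0` to `v M`.
-/

open Finset

section ShuOsher

variable {R : Type*} [CommSemiring R] (α β : ℕ → ℕ → R) (s : ℕ)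

/-- `U i` are the stage values of an `s`-stage Shu–Osher scheme whose stage-`ν` increment
(the time step times the spatial operator at stage `ν`) is `L ν`. -/
def IsShuOsherStages (L U : ℕ → R) : Prop :=
  ∀ i, 1 ≤ i → i ≤ s → U i = ∑ ν ∈ range i, (α i ν * U ν + β i ν * L ν)

variable {α β s}

namespace IsShuOsherStages

theorem zero : IsShuOsherStages α β s 0 0 := fun _ _ _ => by simp

theorem add {L L' U U' : ℕ → R} (h : IsShuOsherStages α β s L U)
    (h' : IsShuOsherStages α β s L' U') : IsShuOsherStages α β s (L + L') (U + U') :=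
  fun i h1 h2 => by
    simp only [Pi.add_apply, h i h1 h2, h' i h1 h2, ← sum_add_distrib]
    exact sum_congr rfl fun _ _ => by ring

theorem const_mul {L U : ℕ → R} (h : IsShuOsherStages α β s L U) (c : R) :
    IsShuOsherStages α β s (fun ν => c * L ν) (fun i => c * U i) :=
  fun i h1 h2 => by
    simp only [h i h1 h2, mul_sum]
    exact sum_congr rfl fun _ _ => by ring

theorem sum {ι : Type*} {t : Finset ι} {L U : ι → ℕ → R}
    (h : ∀ p ∈ t, IsShuOsherStages α β s (L p) (U p)) :
    IsShuOsherStages α β s (∑ p ∈ t, L p) (∑ p ∈ t, U p) := by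
  classical
  induction t using Finset.induction_on with
  | empty => simpa using zero
  | insert p t hp ih =>
    rw [sum_insert hp, sum_insert hp]
    exact (h p (mem_insert_self p t)).add (ih fun q hq => h q (mem_insert_of_mem hq))

theorem eq_initial {U : ℕ → R} (h : IsShuOsherStages α β s 0 U)
    (hα : ∀ i, 1 ≤ i → i ≤ s → ∑ ν ∈ range i, α i ν = 1) {i : ℕ} (hi : i ≤ s) :
    U i = U 0 := by
  induction i using Nat.strong_induction_on with
  | _ i ih =>
    rcases Nat.eq_zero_or_pos i with rfl | hpos
    · rfl
    · calc U i = ∑ ν ∈ range i, α i ν * U 0 := by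
            rw [h i hpos hi]
            refine sum_congr rfl fun ν hν => ?_
            have hν := mem_range.1 hν
            rw [Pi.zero_apply, mul_zero, add_zero, ih ν hν (hν.le.trans hi)]
        _ = U 0 := by rw [← sum_mul, hα i hpos hi, one_mul]

end IsShuOsherStages

end ShuOsher

theorem mul_div_mul_right_cancel {K : Type*} [Field K] {x : K} (hx : x ≠ 0) (a b : K) :
    x * (a / (b * x)) = a / b := by
  rw [mul_div_assoc', mul_comm x a, mul_div_mul_right a b hx]

theorem lts_general_mass_conservation_general
    (s : ℕ)
    (α β : ℕ → ℕ → ℝ)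
    (hconsist : ∀ i, 1 ≤ i → i ≤ s → (∑ ν ∈ Finset.range i, α i ν) = 1)
    (Δx0 Δx1 : ℝ) (hΔx0 : 0 < Δx0) (hΔx1 : 0 < Δx1)
    (Δt : ℝ) (M : ℕ)
    (H : ℕ → ℕ → ℝ)
    (v : ℕ → ℝ) (V : ℕ → ℕ → ℝ)
    (hV0 : ∀ p < M, V p 0 = v p)
    (hVi : ∀ p < M, ∀ i, 1 ≤ i → i ≤ s →
      V p i = ∑ ν ∈ Finset.range i,
        (α i ν * V p ν + β i ν * (Δt / (M * Δx1)) * H p ν))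
    (hvnext : ∀ p < M, v (p + 1) = V p s)
    (w0 w1 : ℝ) (W : ℕ → ℝ) (hW0 : W 0 = w0)
    (hWi : ∀ i, 1 ≤ i → i ≤ s →
      W i = ∑ ν ∈ Finset.range i,
        (α i ν * W ν - β i ν * (Δt / (M * Δx0)) * ∑ p ∈ Finset.range M, H p ν))
    (hw1 : w1 = W s) :
    Δx0 * w1 + Δx1 * v M = Δx0 * w0 + Δx1 * v 0 := by
  have hfine : ∀ p ∈ range M,
      IsShuOsherStages α β s (fun ν => Δt / (M * Δx1) * H p ν) (V p) :=
    fun p hp i h1 h2 => by simp only [hVi p (mem_range.1 hp) i h1 h2, mul_assoc]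
  have hcoarse : IsShuOsherStages α β s
      (fun ν => -(Δt / (M * Δx0) * ∑ p ∈ range M, H p ν)) W :=
    fun i h1 h2 => by simp only [hWi i h1 h2, mul_neg, ← sub_eq_add_neg, mul_assoc]
  have hmass : IsShuOsherStages α β s 0
      (fun i => Δx0 * W i + Δx1 * ∑ p ∈ range M, V p i) := by
    convert (hcoarse.const_mul Δx0).add ((IsShuOsherStages.sum hfine).const_mul Δx1) using 1
    · funext ν
      simp only [Pi.add_apply, Finset.sum_apply, ← mul_sum, mul_neg, ← mul_assoc,
        mul_div_mul_right_cancel hΔx0.ne', mul_div_mul_right_cancel hΔx1.ne', Pi.zero_apply]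
      ring
    · funext i
      simp only [Pi.add_apply, Finset.sum_apply]
  have hconserved := hmass.eq_initial hconsist le_rfl
  rw [sum_congr rfl fun p hp => (hvnext p (mem_range.1 hp)).symm,
    sum_congr rfl fun p hp => hV0 p (mem_range.1 hp)] at hconserved
  have htelescope : ∑ p ∈ range M, v (p + 1) - ∑ p ∈ range M, v p = v M - v 0 := by
    rw [← sum_sub_distrib, sum_range_sub]
  rw [hw1, ← hW0]
  linear_combination hconserved - Δx1 * htelescope

/-- Exact mass conservation of the general `s`-stage LTS corrector in Shu–Osher form:
the fine cell (width `Δx1`) is advanced with `M` substeps of size `Δt/M` receiving the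
interface fluxes `H p ν`, while the interface cell (width `Δx0`) takes one coarse step
whose stage `i` accumulates, for each stage `ν`, the average over all substeps of the
stage-`ν` fluxes; total mass `Δx0 * w + Δx1 * v` is conserved. -/
theorem lts_general_mass_conservation
    (s : ℕ) (hs : 1 ≤ s)
    (α β : ℕ → ℕ → ℝ)
    (hconsist : ∀ i, 1 ≤ i → i ≤ s → (∑ ν ∈ Finset.range i, α i ν) = 1)
    (Δx0 Δx1 : ℝ) (hΔx0 : 0 < Δx0) (hΔx1 : 0 < Δx1)
    (Δt : ℝ) (M : ℕ) (hM : 1 ≤ M)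
    (H : ℕ → ℕ → ℝ)
    (v : ℕ → ℝ) (V : ℕ → ℕ → ℝ)
    (hV0 : ∀ p < M, V p 0 = v p)
    (hVi : ∀ p < M, ∀ i, 1 ≤ i → i ≤ s →
      V p i = ∑ ν ∈ Finset.range i,
        (α i ν * V p ν + β i ν * (Δt / (M * Δx1)) * H p ν))
    (hvnext : ∀ p < M, v (p + 1) = V p s)
    (w0 w1 : ℝ) (W : ℕ → ℝ) (hW0 : W 0 = w0)
    (hWi : ∀ i, 1 ≤ i → i ≤ s →
      W i = ∑ ν ∈ Finset.range i,
        (α i ν * W ν - β i ν * (Δt / (M * Δx0)) * ∑ p ∈ Finset.range M, H p ν))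
    (hw1 : w1 = W s) :
    Δx0 * w1 + Δx1 * v M = Δx0 * w0 + Δx1 * v 0 :=
  lts_general_mass_conservation_general s α β hconsist Δx0 Δx1 hΔx0 hΔx1 Δt M H v V hV0 hVi hvnext
    w0 w1 W hW0 hWi hw1
end

section
/- Let ū : ℤ → ℝ, let λ : ℤ → ℝ with λ_j ≥ 0 for all j, and for ν ∈ {0,1} let C^{(ν)}, D^{(ν)} : ℤ → ℝ with C^{(ν)}_j ≥ 0 and D^{(ν)}_j ≥ 0 for all j (index j standing for the cell edge j+1/2). Define the SSP-RK(2,2) incremental-form scheme: ū¹_j = ū_j + λ_j·( C^{(0)}_j·Δ₊ū_j − D^{(0)}_{j−1}·Δ₋ū_j ) and ū²_j = (1/2)·ū_j + (1/2)·( ū¹_j + λ_j·( C^{(1)}_j·Δ₊ū¹_j − D^{(1)}_{j−1}·Δ₋ū¹_j ) ). Assume the CFL-type condition λ_{j+1}·D^{(ν)}_j + λ_j·C^{(ν)}_j ≤ 1 for all j ∈ ℤ and ν ∈ {0,1}. Then, writing ū⁰ := ū, for every j ∈ ℤ: |ū²_{j+1} − ū²_j| ≤ |ū_{j+1} − ū_j|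 + (1/2)·Σ_{ν=0}^{1} [ λ_{j+1}·( C^{(ν)}_{j+1}·|Δ₊ū^{(ν)}_{j+1}| − D^{(ν)}_j·|Δ₋ū^{(ν)}_{j+1}| ) − λ_j·( C^{(ν)}_j·|Δ₊ū^{(ν)}_j| − D^{(ν)}_{j−1}·|Δ₋ū^{(ν)}_j| ) ]. -/
/-!
Each stage is a Harten-type incremental step: under the CFL condition, the new difference
`Δ₊v_j` is a combination of `Δ₋u_j`, `Δ₊u_j`, `Δ₊u_{j+1}` with nonnegative weights, so the
triangle inequality bounds `|Δ₊v_j|` by `|Δ₊u_j|` plus a telescoping flux difference. The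
Heun stage averages `ū` with the second incremental step applied to `ū¹`, so the two stage
estimates are combined with weights `1/2`.
-/

section IncrementalStep

variable {R : Type*} [CommRing R]

def incrementalStep (lam C D u : ℤ → R) (j : ℤ) : R :=
  u j + lam j * (C j * (u (j + 1) - u j) - D (j - 1) * (u j - u (j - 1)))

lemma incrementalStep_sub (lam C D u : ℤ → R) (j : ℤ) :
    incrementalStep lam C D u (j + 1) - incrementalStep lam C D u j =
      (1 - lam (j + 1) * D j - lam j * C j) * (u (j + 1) - u j)
        + lam (j + 1) * C (j + 1) * (u (j + 2) - u (j + 1))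
        + lam j * D (j - 1) * (u j - u (j - 1)) := by
  simp only [incrementalStep, add_sub_cancel_right, show j + 1 + 1 = j + 2 by ring]
  ring

lemma abs_incrementalStep_sub_le [LinearOrder R] [IsStrictOrderedRing R] (lam C D u : ℤ → R) (j : ℤ)
    (hlam : ∀ j, 0 ≤ lam j) (hC : ∀ j, 0 ≤ C j) (hD : ∀ j, 0 ≤ D j)
    (hCFL : lam (j + 1) * D j + lam j * C j ≤ 1) :
    |incrementalStep lam C D u (j + 1) - incrementalStep lam C D u j| ≤
      |u (j + 1) - u j| +
        (lam (j + 1) * (C (j + 1) * |u (j + 2) - u (j + 1)| - D j * |u (j + 1) - u j|)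
          - lam j * (C j * |u (j + 1) - u j| - D (j - 1) * |u j - u (j - 1)|)) := by
  have hcenter : 0 ≤ 1 - lam (j + 1) * D j - lam j * C j := by linarith
  have hright : 0 ≤ lam (j + 1) * C (j + 1) := mul_nonneg (hlam _) (hC _)
  have hleft : 0 ≤ lam j * D (j - 1) := mul_nonneg (hlam _) (hD _)
  calc _ ≤ |(1 - lam (j + 1) * D j - lam j * C j) * (u (j + 1) - u j)|
          + |lam (j + 1) * C (j + 1) * (u (j + 2) - u (j + 1))|
          + |lam j * D (j - 1) * (u j - u (j - 1))| := by
        rw [incrementalStep_sub]; exact abs_add_three _ _ _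
    _ = _ := by
        rw [abs_mul _ (u (j + 1) - u j), abs_mul _ (u (j + 2) - u (j + 1)),
          abs_mul _ (u j - u (j - 1)), abs_of_nonneg hcenter, abs_of_nonneg hright,
          abs_of_nonneg hleft]
        ring

end IncrementalStep

lemma abs_half_add_half_sub_le {R : Type*} [Field R] [LinearOrder R] [IsStrictOrderedRing R]
    (a b a' b' : R) :
    |(1/2 * a' + 1/2 * b') - (1/2 * a + 1/2 * b)| ≤ 1/2 * |a' - a| + 1/2 * |b' - b| := by
  calc _ = |1/2 * (a' - a) + 1/2 * (b' - b)| := by ring_nf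
    _ ≤ |1/2 * (a' - a)| + |1/2 * (b' - b)| := abs_add_le _ _
    _ = _ := by rw [abs_mul, abs_mul, abs_of_pos one_half_pos]

/-- Local difference estimate for the SSP-RK(2,2) incremental-form scheme: under
nonnegativity of the incremental coefficients and the CFL-type condition
`λ_{j+1}·D^{(ν)}_j + λ_j·C^{(ν)}_j ≤ 1`, the consecutive differences of the updated
means are bounded by the old differences plus a telescoping correction involving the
two stages (`ū⁰ = ū`, `ū¹` the first stage). -/
theorem rk22_incremental_difference_estimate
    (ub : ℤ → ℝ) (lam : ℤ → ℝ) (hlam : ∀ j, 0 ≤ lam j)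
    (C D : Fin 2 → ℤ → ℝ)
    (hC : ∀ ν j, 0 ≤ C ν j) (hD : ∀ ν j, 0 ≤ D ν j)
    (u1 u2 : ℤ → ℝ)
    (hu1 : ∀ j, u1 j = ub j +
      lam j * (C 0 j * (ub (j + 1) - ub j) - D 0 (j - 1) * (ub j - ub (j - 1))))
    (hu2 : ∀ j, u2 j = (1/2) * ub j + (1/2) * (u1 j +
      lam j * (C 1 j * (u1 (j + 1) - u1 j) - D 1 (j - 1) * (u1 j - u1 (j - 1)))))
    (hCFL : ∀ (ν : Fin 2) (j : ℤ), lam (j + 1) * D ν j + lam j * C ν j ≤ 1) :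
    ∀ j : ℤ,
      |u2 (j + 1) - u2 j| ≤ |ub (j + 1) - ub j| +
        (1/2) *
          ((lam (j + 1) * (C 0 (j + 1) * |ub (j + 2) - ub (j + 1)|
              - D 0 j * |ub (j + 1) - ub j|)
            - lam j * (C 0 j * |ub (j + 1) - ub j|
              - D 0 (j - 1) * |ub j - ub (j - 1)|))
          + (lam (j + 1) * (C 1 (j + 1) * |u1 (j + 2) - u1 (j + 1)|
              - D 1 j * |u1 (j + 1) - u1 j|)
            - lam j * (C 1 j * |u1 (j + 1) - u1 j|
              - D 1 (j - 1) * |u1 j - u1 (j - 1)|))) := by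
  intro j
  have hstage1 : u1 = incrementalStep lam (C 0) (D 0) ub := funext hu1
  have hstage2 : ∀ j, u2 j = 1/2 * ub j + 1/2 * incrementalStep lam (C 1) (D 1) u1 j := hu2
  have h0 := abs_incrementalStep_sub_le lam (C 0) (D 0) ub j hlam (hC 0) (hD 0) (hCFL 0 j)
  have h1 := abs_incrementalStep_sub_le lam (C 1) (D 1) u1 j hlam (hC 1) (hD 1) (hCFL 1 j)
  rw [← hstage1] at h0
  have havg := abs_half_add_half_sub_le (ub j) (incrementalStep lam (C 1) (D 1) u1 j)
    (ub (j + 1)) (incrementalStep lam (C 1) (D 1) u1 (j + 1))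
  rw [← hstage2, ← hstage2] at havg
  linarith
end

section
/- Let E be a real normed vector space, let L : E → E satisfy the Lipschitz condition ‖L(x) − L(y)‖ ≤ K·‖x − y‖ for all x, y ∈ E, let a ∈ E, Δt ≥ 0, let M ≥ 1 be an integer and 0 ≤ p ≤ M−1. Define the coarse forward-Euler stage w¹ = a + Δt·L(a), the stage-0 predictor w_{p,0} = (1 − p/M)·a + (p/M)·w¹, and the stage-1 predictor w_{p,1} = (1 − (p+1)/M)·a + ((p+1)/M)·w¹. Then the predicted stage-1 value differs from the value obtained by an actual forward-Euler substep from the stage-0 predictor by at most ‖ w_{p,0} + (Δt/M)·L(w_{p,0}) − w_{p,1} ‖ ≤ K·(p/M²)·Δt²·‖L(a)‖. -/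
/-! Both predictors lie on the line `s ↦ a + s • L a`, at `s = pΔt/M` and `s = (p+1)Δt/M`, so
the stage-1 predictor is the stage-0 predictor `w` plus `(Δt/M) • L a`. The Euler substep from `w`
therefore misses it by `(Δt/M) • (L w - L a)`, and the Lipschitz bound together with
`‖w - a‖ = (p/M) |Δt| ‖L a‖` gives the estimate. -/

theorem one_sub_smul_add_smul_add {R E : Type*} [Ring R] [AddCommGroup E] [Module R E]
    (θ : R) (a v : E) : (1 - θ) • a + θ • (a + v) = a + θ • v := by
  rw [smul_add, sub_smul, one_smul]
  abel

theorem norm_euler_step_sub_linear_extrapolation_le {E : Type*} [NormedAddCommGroup E]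
    [NormedSpace ℝ E] {L : E → E} {K : ℝ} (hL : ∀ x y : E, ‖L x - L y‖ ≤ K * ‖x - y‖)
    (a : E) (s h : ℝ) :
    ‖(a + s • L a) + h • L (a + s • L a) - (a + (s + h) • L a)‖ ≤ K * |s| * |h| * ‖L a‖ := by
  have hdefect : (a + s • L a) + h • L (a + s • L a) - (a + (s + h) • L a)
      = h • (L (a + s • L a) - L a) := by
    rw [smul_sub, add_smul]
    abel
  calc ‖(a + s • L a) + h • L (a + s • L a) - (a + (s + h) • L a)‖
      = |h| * ‖L (a + s • L a) - L a‖ := by rw [hdefect, norm_smul, Real.norm_eq_abs]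
    _ ≤ |h| * (K * ‖a + s • L a - a‖) := mul_le_mul_of_nonneg_left (hL _ _) (abs_nonneg h)
    _ = K * |s| * |h| * ‖L a‖ := by
      rw [add_sub_cancel_left, norm_smul, Real.norm_eq_abs]
      ring

theorem second_order_predictor_consistency_general
    {E : Type*} [NormedAddCommGroup E] [NormedSpace ℝ E]
    (L : E → E) (K : ℝ)
    (hL : ∀ x y : E, ‖L x - L y‖ ≤ K * ‖x - y‖)
    (a : E) (Δt : ℝ)
    (M : ℕ) (p : ℕ) :
    ‖((1 - (p : ℝ) / M) • a + ((p : ℝ) / M) • (a + Δt • L a))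
        + (Δt / M) • L ((1 - (p : ℝ) / M) • a + ((p : ℝ) / M) • (a + Δt • L a))
        - ((1 - ((p : ℝ) + 1) / M) • a + (((p : ℝ) + 1) / M) • (a + Δt • L a))‖
      ≤ K * ((p : ℝ) / (M : ℝ) ^ 2) * Δt ^ 2 * ‖L a‖ := by
  have hstage0 : (1 - (p : ℝ) / M) • a + ((p : ℝ) / M) • (a + Δt • L a)
      = a + ((p : ℝ) / M * Δt) • L a := by
    rw [one_sub_smul_add_smul_add, smul_smul]
  have hstage1 : (1 - ((p : ℝ) + 1) / M) • a + (((p : ℝ) + 1) / M) • (a + Δt • L a)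
      = a + ((p : ℝ) / M * Δt + Δt / M) • L a := by
    rw [one_sub_smul_add_smul_add, smul_smul, add_div, add_mul, one_div_mul_eq_div]
  rw [hstage0, hstage1]
  refine (norm_euler_step_sub_linear_extrapolation_le hL a _ _).trans_eq ?_
  rw [abs_mul, abs_div, abs_div, Nat.abs_cast, Nat.abs_cast, ← sq_abs Δt]
  ring

/-- Consistency of the second-order LTS stage predictors: with `w¹ = a + Δt·L(a)`,
stage-0 predictor `w_{p,0} = (1 − p/M)·a + (p/M)·w¹` and stage-1 predictor
`w_{p,1} = (1 − (p+1)/M)·a + ((p+1)/M)·w¹`, applying a forward-Euler substep of size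
`Δt/M` to `w_{p,0}` differs from `w_{p,1}` by at most `K·(p/M²)·Δt²·‖L(a)‖`. -/
theorem second_order_predictor_consistency
    {E : Type*} [NormedAddCommGroup E] [NormedSpace ℝ E]
    (L : E → E) (K : ℝ)
    (hL : ∀ x y : E, ‖L x - L y‖ ≤ K * ‖x - y‖)
    (a : E) (Δt : ℝ) (hΔt : 0 ≤ Δt)
    (M : ℕ) (hM : 1 ≤ M) (p : ℕ) (hp : p ≤ M - 1) :
    ‖((1 - (p : ℝ) / M) • a + ((p : ℝ) / M) • (a + Δt • L a))
        + (Δt / M) • L ((1 - (p : ℝ) / M) • a + ((p : ℝ) / M) • (a + Δt • L a))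
        - ((1 - ((p : ℝ) + 1) / M) • a + (((p : ℝ) + 1) / M) • (a + Δt • L a))‖
      ≤ K * ((p : ℝ) / (M : ℝ) ^ 2) * Δt ^ 2 * ‖L a‖ :=
  second_order_predictor_consistency_general L K hL a Δt M p
end

section
/- Let E be a real normed vector space, let L : E → E be differentiable with derivative DL(x) at every x (a continuous linear map E → E, with HasFDerivAt L (DL x) x), and assume ‖DL(x) − DL(y)‖ ≤ K·‖x − y‖ for all x, y ∈ E. Let a ∈ E and Δt ≥ 0, and define the SSP-RK(3,3) stages w¹ = a + Δt·L(a) and w² = (3/4)·a + (1/4)·w¹ + (Δt/4)·L(w¹). Then ‖ 4·w² − 2·a − 2·w¹ − Δt²·DL(a)(L(a)) ‖ ≤ (K/2)·Δt³·‖L(a)‖². -/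
/-!
The combination `4·w² − 2·a − 2·w¹` collapses to `Δt·(L(a + Δt·L a) − L a)`, so after
subtracting `Δt²·DL(a)(L a)` what remains is `Δt` times the first-order Taylor remainder of `L`
at `a` in the direction `Δt·L a`. A `K`-Lipschitz derivative bounds that remainder by
`(K/2)·‖h‖²`: along `t ↦ a + t•h` the remainder has derivative of norm at most `K‖h‖²·t`.
-/

open Set

section TaylorRemainder

variable {E F : Type*} [NormedAddCommGroup E] [NormedSpace ℝ E]
  [NormedAddCommGroup F] [NormedSpace ℝ F] {f : E → F} {f' : E → E →L[ℝ] F}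

theorem hasDerivAt_comp_add_smul (hf : ∀ x, HasFDerivAt f (f' x) x) (a h : E) (t : ℝ) :
    HasDerivAt (fun s : ℝ => f (a + s • h)) (f' (a + t • h) h) t := by
  have hline : HasDerivAt (fun s : ℝ => a + s • h) h t := by
    simpa using ((hasDerivAt_id t).smul_const h).const_add a
  exact (hf (a + t • h)).comp_hasDerivAt t hline

theorem norm_sub_sub_fderiv_le_of_lipschitz {K : ℝ} (hf : ∀ x, HasFDerivAt f (f' x) x)
    (hK : ∀ x y, ‖f' x - f' y‖ ≤ K * ‖x - y‖) (a h : E) :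
    ‖f (a + h) - f a - f' a h‖ ≤ K / 2 * ‖h‖ ^ 2 := by
  set g : ℝ → F := fun t => f (a + t • h) - f a - t • f' a h
  have hg : ∀ t, HasDerivAt g (f' (a + t • h) h - f' a h) t := fun t =>
    ((hasDerivAt_comp_add_smul hf a h t).sub_const (f a)).sub
      (by simpa using (hasDerivAt_id t).smul_const (f' a h))
  have hbound : ∀ t ∈ Ico (0 : ℝ) 1, ‖f' (a + t • h) h - f' a h‖ ≤ K * ‖h‖ ^ 2 * t := by
    intro t ht
    calc ‖f' (a + t • h) h - f' a h‖ = ‖(f' (a + t • h) - f' a) h‖ := rfl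
      _ ≤ ‖f' (a + t • h) - f' a‖ * ‖h‖ := ContinuousLinearMap.le_opNorm _ h
      _ ≤ K * ‖a + t • h - a‖ * ‖h‖ := by gcongr; exact hK _ _
      _ = K * ‖h‖ ^ 2 * t := by
        rw [add_sub_cancel_left, norm_smul, Real.norm_of_nonneg ht.1]; ring
  have hbarrier : ∀ t, HasDerivAt (fun s : ℝ => K / 2 * ‖h‖ ^ 2 * s ^ 2) (K * ‖h‖ ^ 2 * t) t :=
    fun t => ((hasDerivAt_pow 2 t).const_mul (K / 2 * ‖h‖ ^ 2)).congr_deriv (by ring)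
  have hg_one := image_norm_le_of_norm_deriv_right_le_deriv_boundary
    (fun t _ => (hg t).continuousAt.continuousWithinAt) (fun t _ => (hg t).hasDerivWithinAt)
    (by simp [g]) hbarrier hbound (right_mem_Icc.2 zero_le_one)
  simpa [g] using hg_one

end TaylorRemainder

/-- Extraction of the second time derivative from the first two SSP-RK(3,3) stages:
if `L` is differentiable with Lipschitz derivative `DL` (constant `K`), then with
`w¹ = a + Δt·L(a)` and `w² = (3/4)·a + (1/4)·w¹ + (Δt/4)·L(w¹)`, the combination
`4·w² − 2·a − 2·w¹` equals `Δt²·DL(a)(L(a))` up to an error of size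
`(K/2)·Δt³·‖L(a)‖²`. -/
theorem rk33_second_derivative_extraction
    {E : Type*} [NormedAddCommGroup E] [NormedSpace ℝ E]
    (L : E → E) (DL : E → E →L[ℝ] E)
    (hderiv : ∀ x : E, HasFDerivAt L (DL x) x)
    (K : ℝ) (hK : ∀ x y : E, ‖DL x - DL y‖ ≤ K * ‖x - y‖)
    (a : E) (Δt : ℝ) (hΔt : 0 ≤ Δt) :
    ‖(4 : ℝ) • ((3/4 : ℝ) • a + (1/4 : ℝ) • (a + Δt • L a)
        + (Δt / 4) • L (a + Δt • L a))
      - (2 : ℝ) • a - (2 : ℝ) • (a + Δt • L a) - (Δt ^ 2) • (DL a) (L a)‖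
      ≤ (K / 2) * Δt ^ 3 * ‖L a‖ ^ 2 := by
  have hstages : (4 : ℝ) • ((3/4 : ℝ) • a + (1/4 : ℝ) • (a + Δt • L a)
        + (Δt / 4) • L (a + Δt • L a))
      - (2 : ℝ) • a - (2 : ℝ) • (a + Δt • L a) - (Δt ^ 2) • (DL a) (L a)
      = Δt • (L (a + Δt • L a) - L a - DL a (Δt • L a)) := by
    rw [map_smul]
    module
  rw [hstages, norm_smul, Real.norm_of_nonneg hΔt]
  calc Δt * ‖L (a + Δt • L a) - L a - DL a (Δt • L a)‖
      ≤ Δt * (K / 2 * ‖Δt • L a‖ ^ 2) := by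
        gcongr
        exact norm_sub_sub_fderiv_le_of_lipschitz hderiv hK a (Δt • L a)
    _ = K / 2 * Δt ^ 3 * ‖L a‖ ^ 2 := by
        rw [norm_smul, Real.norm_of_nonneg hΔt]; ring
end

section
/- Let E be a real normed vector space, let L : E → E be twice continuously differentiable (ContDiff ℝ 2), let w : ℝ → E satisfy w'(τ) = L(w(τ)) for all τ ∈ ℝ (in the sense of HasDerivAt), let t ∈ ℝ and θ ∈ [0,1]. For Δt ∈ ℝ define the SSP-RK(3,3) stages w¹(Δt) = w(t) + Δt·L(w(t)) and w²(Δt) = (3/4)·w(t) + (1/4)·w¹(Δt) + (Δt/4)·L(w¹(Δt)), and the third-order predictor P(Δt) = (1 − θ − θ²)·w(t) + (θ − θ²)·w¹(Δt) + 2θ²·w²(Δt). Then there exist constants C > 0 and δ > 0 such that ‖ w(t + θ·Δt) − P(Δt) ‖ ≤ C·|Δt|³ for all |Δt| ≤ δ (i.e. w(t + θ·Δt) − P(Δt) = O(Δt³) as Δt → 0). -/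
/-!
Write `a = L(w(t))` and `Q = DL(w(t)) a = w''(t)`. Expanding the stages gives
`w(t + θΔt) − P(Δt) = φ(θΔt) − (θ²Δt/2)·R(Δt)`, where
`φ(s) = w(t + s) − w(t) − s·a − (s²/2)·Q` is the second-order Taylor remainder of `w` at `t` and
`R(Δt) = L(w(t) + Δt·a) − a − Δt·Q` the first-order one of `Δt ↦ L(w(t) + Δt·a)`.
The mean value inequality turns a bound `O(sⁿ)` on a derivative into `O(sⁿ⁺¹)` on the function,
so `φ(s) = O(s³)` and `R(Δt) = O(Δt²)`.
-/

open Asymptotics Filter Topology Metric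

theorem Asymptotics.IsBigO.comp_const_mul {F : Type*} [Norm F] {f : ℝ → F} {n : ℕ}
    (hf : f =O[𝓝 0] (· ^ n)) (c : ℝ) : (fun x => f (c * x)) =O[𝓝 0] (· ^ n) := by
  have htends : Tendsto (c * ·) (𝓝 0) (𝓝 0) := by
    simpa using (continuous_const_mul c).tendsto 0
  refine (hf.comp_tendsto htends).trans ?_
  simpa [Function.comp_def, mul_pow] using
    (isBigO_refl (· ^ n) (𝓝 (0 : ℝ))).const_mul_left (c ^ n)

theorem Asymptotics.IsBigO.exists_pos_bound_of_nhds_zero {F : Type*} [Norm F] {f : ℝ → F}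
    {g : ℝ → ℝ} (h : f =O[𝓝 0] g) :
    ∃ C > (0 : ℝ), ∃ δ > (0 : ℝ), ∀ x : ℝ, |x| ≤ δ → ‖f x‖ ≤ C * ‖g x‖ := by
  obtain ⟨C, hC, hfg⟩ := h.exists_pos
  obtain ⟨ε, hε, hball⟩ := Metric.eventually_nhds_iff_ball.1 hfg.bound
  refine ⟨C, hC, ε / 2, half_pos hε, fun x hx => hball x ?_⟩
  rw [mem_ball_zero_iff, Real.norm_eq_abs]
  linarith

section
variable {E : Type*} [NormedAddCommGroup E] [NormedSpace ℝ E]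

theorem isBigO_pow_succ_of_hasDerivAt {f f' : ℝ → E} {n : ℕ}
    (hf : ∀ᶠ s in 𝓝 0, HasDerivAt f (f' s) s) (hf' : f' =O[𝓝 0] (· ^ n)) :
    (fun s => f s - f 0) =O[𝓝 0] (· ^ (n + 1)) := by
  obtain ⟨c, hc0, hc⟩ := hf'.exists_nonneg
  obtain ⟨ε, hε, hball⟩ := Metric.eventually_nhds_iff_ball.1 (hf.and hc.bound)
  refine IsBigO.of_bound c (Metric.eventually_nhds_iff_ball.2 ⟨ε, hε, fun s hs => ?_⟩)
  have hsmaller : ∀ y ∈ Set.uIcc 0 s, ‖y‖ ≤ ‖s‖ := fun y hy => by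
    simpa using Set.abs_sub_left_of_mem_uIcc hy
  have hsub : Set.uIcc 0 s ⊆ ball 0 ε := fun y hy =>
    mem_ball_zero_iff.2 ((hsmaller y hy).trans_lt (mem_ball_zero_iff.1 hs))
  have hbound : ∀ y ∈ Set.uIcc 0 s, ‖f' y‖ ≤ c * ‖s ^ n‖ := fun y hy => by
    refine (hball y (hsub hy)).2.trans (mul_le_mul_of_nonneg_left ?_ hc0)
    simpa only [norm_pow] using pow_le_pow_left₀ (norm_nonneg y) (hsmaller y hy) n
  have := (convex_uIcc 0 s).norm_image_sub_le_of_norm_hasDerivWithin_le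
    (fun y hy => (hball y (hsub hy)).1.hasDerivWithinAt) hbound Set.left_mem_uIcc
    Set.right_mem_uIcc
  rwa [sub_zero, mul_assoc, ← norm_mul, ← pow_succ] at this

theorem isBigO_taylor_two {g g' : ℝ → E} (hg : ∀ᶠ s in 𝓝 0, HasDerivAt g (g' s) s)
    (hg' : DifferentiableAt ℝ g' 0) :
    (fun s => g s - g 0 - s • g' 0) =O[𝓝 0] (· ^ 2) := by
  have hderiv : ∀ᶠ s in 𝓝 0, HasDerivAt (fun s => g s - s • g' 0) (g' s - g' 0) s :=
    hg.mono fun s hs =>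
      (hs.sub ((hasDerivAt_id s).smul_const (g' 0))).congr_deriv (by rw [one_smul])
  have hlin : (fun s => g' s - g' 0) =O[𝓝 0] (· ^ 1) := by
    simpa using hg'.isBigO_sub
  simpa [sub_right_comm] using isBigO_pow_succ_of_hasDerivAt hderiv hlin

theorem isBigO_taylor_three {g g' g'' : ℝ → E} (hg : ∀ᶠ s in 𝓝 0, HasDerivAt g (g' s) s)
    (hg' : ∀ᶠ s in 𝓝 0, HasDerivAt g' (g'' s) s) (hg'' : DifferentiableAt ℝ g'' 0) :
    (fun s => g s - g 0 - s • g' 0 - (s ^ 2 / 2) • g'' 0) =O[𝓝 0] (· ^ 3) := by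
  have hderiv : ∀ᶠ s in 𝓝 0, HasDerivAt (fun s => g s - s • g' 0 - (s ^ 2 / 2) • g'' 0)
      (g' s - g' 0 - s • g'' 0) s :=
    hg.mono fun s hs => by
      have hsq : HasDerivAt (fun s : ℝ => s ^ 2 / 2) s s := by
        simpa using (hasDerivAt_pow 2 s).div_const 2
      exact ((hs.sub ((hasDerivAt_id s).smul_const (g' 0))).sub
        (hsq.smul_const (g'' 0))).congr_deriv (by rw [one_smul])
  simpa [sub_right_comm] using isBigO_pow_succ_of_hasDerivAt hderiv (isBigO_taylor_two hg' hg'')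

end

theorem third_order_predictor_error_general
    {E : Type*} [NormedAddCommGroup E] [NormedSpace ℝ E]
    (L : E → E) (hL : ContDiff ℝ 2 L)
    (w : ℝ → E) (hw : ∀ τ : ℝ, HasDerivAt w (L (w τ)) τ)
    (t θ : ℝ)
    (w1 w2 P : ℝ → E)
    (hw1 : ∀ Δt : ℝ, w1 Δt = w t + Δt • L (w t))
    (hw2 : ∀ Δt : ℝ, w2 Δt = (3/4 : ℝ) • w t + (1/4 : ℝ) • w1 Δt
      + (Δt / 4) • L (w1 Δt))
    (hP : ∀ Δt : ℝ, P Δt = (1 - θ - θ ^ 2) • w t + (θ - θ ^ 2) • w1 Δt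
      + (2 * θ ^ 2) • w2 Δt) :
    ∃ C > (0 : ℝ), ∃ δ > (0 : ℝ), ∀ Δt : ℝ, |Δt| ≤ δ →
      ‖w (t + θ * Δt) - P Δt‖ ≤ C * |Δt| ^ 3 := by
  have hLd : Differentiable ℝ L := hL.differentiable two_ne_zero
  have hDLd : Differentiable ℝ (fderiv ℝ L) :=
    (hL.fderiv_right (m := 1) le_rfl).differentiable one_ne_zero
  set a := L (w t)
  set Q := fderiv ℝ L (w t) a
  have hshift : ∀ s : ℝ, HasDerivAt (fun s => w (t + s)) (L (w (t + s))) s := fun s =>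
    (hw (t + s)).comp_const_add t s
  have hsol : (fun s : ℝ => w (t + s) - w t - s • a - (s ^ 2 / 2) • Q) =O[𝓝 0] (· ^ 3) := by
    simpa using isBigO_taylor_three (.of_forall hshift)
      (.of_forall fun s => (hLd _).hasFDerivAt.comp_hasDerivAt s (hshift s))
      ((hDLd _).comp 0 (hshift 0).differentiableAt |>.clm_apply
        ((hLd _).comp 0 (hshift 0).differentiableAt))
  have hline : ∀ s : ℝ, HasDerivAt (fun s => w t + s • a) a s := fun s => by
    simpa using ((hasDerivAt_id s).smul_const a).const_add (w t)
  have hstage : (fun Δt : ℝ => L (w t + Δt • a) - a - Δt • Q) =O[𝓝 0] (· ^ 2) := by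
    simpa using isBigO_taylor_two
      (.of_forall fun s => (hLd _).hasFDerivAt.comp_hasDerivAt s (hline s))
      ((hDLd _).comp 0 (hline 0).differentiableAt |>.clm_apply (differentiableAt_const a))
  have hsplit : ∀ Δt, w (t + θ * Δt) - P Δt = (w (t + θ * Δt) - w t - (θ * Δt) • a
      - ((θ * Δt) ^ 2 / 2) • Q) - (θ ^ 2 / 2 * Δt) • (L (w t + Δt • a) - a - Δt • Q) := by
    intro Δt
    rw [hP, hw2, hw1]
    module
  have herror : (fun Δt => w (t + θ * Δt) - P Δt) =O[𝓝 0] (· ^ 3) := by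
    simp only [hsplit]
    refine (hsol.comp_const_mul θ).sub ?_
    exact (((isBigO_refl (fun x : ℝ => x) _).const_mul_left (θ ^ 2 / 2)).smul hstage).congr_right
      fun x => by rw [smul_eq_mul]; ring
  obtain ⟨C, hC, δ, hδ, hbound⟩ := herror.exists_pos_bound_of_nhds_zero
  exact ⟨C, hC, δ, hδ, fun Δt hΔt => by simpa using hbound Δt hΔt⟩

/-- Third-order accuracy of the SSP-RK(3,3) based LTS predictor: for the autonomous ODE
`w' = L(w)` with `L` twice continuously differentiable, the predictor
`P(Δt) = (1 − θ − θ²)·w(t) + (θ − θ²)·w¹ + 2θ²·w²` built from the first two SSP-RK(3,3)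
stages with the coarse step `Δt` satisfies `w(t + θ·Δt) − P(Δt) = O(Δt³)`. -/
theorem third_order_predictor_error
    {E : Type*} [NormedAddCommGroup E] [NormedSpace ℝ E]
    (L : E → E) (hL : ContDiff ℝ 2 L)
    (w : ℝ → E) (hw : ∀ τ : ℝ, HasDerivAt w (L (w τ)) τ)
    (t θ : ℝ) (hθ0 : 0 ≤ θ) (hθ1 : θ ≤ 1)
    (w1 w2 P : ℝ → E)
    (hw1 : ∀ Δt : ℝ, w1 Δt = w t + Δt • L (w t))
    (hw2 : ∀ Δt : ℝ, w2 Δt = (3/4 : ℝ) • w t + (1/4 : ℝ) • w1 Δt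
      + (Δt / 4) • L (w1 Δt))
    (hP : ∀ Δt : ℝ, P Δt = (1 - θ - θ ^ 2) • w t + (θ - θ ^ 2) • w1 Δt
      + (2 * θ ^ 2) • w2 Δt) :
    ∃ C > (0 : ℝ), ∃ δ > (0 : ℝ), ∀ Δt : ℝ, |Δt| ≤ δ →
      ‖w (t + θ * Δt) - P Δt‖ ≤ C * |Δt| ^ 3 :=
  third_order_predictor_error_general L hL w hw t θ w1 w2 P hw1 hw2 hP
end

section
/- Let E be a real normed vector space, let L : E → E be twice continuously differentiable (ContDiff ℝ 2), let a ∈ E, let M ≥ 1 be an integer and 0 ≤ p ≤ M−1, and set θ = p/M, θ̂ = p²/M², η = (p+1)/M, η̂ = p(p+2)/M². For Δt ∈ ℝ define the SSP-RK(3,3) stages w¹(Δt) = a + Δt·L(a) and w²(Δt) = (3/4)·a + (1/4)·w¹(Δt) + (Δt/4)·L(w¹(Δt)), and the predictors w_{p,0}(Δt) = (1 − θ − θ̂)·a + (θ − θ̂)·w¹(Δt) + 2θ̂·w²(Δt) and w_{p,1}(Δt) = (1 − η − η̂)·a + (η − η̂)·w¹(Δt) + 2η̂·w²(Δt). Then there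 exist constants C > 0 and δ > 0 such that ‖ w_{p,0}(Δt) + (Δt/M)·L(w_{p,0}(Δt)) − w_{p,1}(Δt) ‖ ≤ C·|Δt|³ for all |Δt| ≤ δ (i.e. the stage-1 prediction is consistent to third order with applying a forward-Euler substep of size Δt/M to the stage-0 prediction). -/
/-!
Each predictor is an affine combination of the coarse stages, hence of the form
`a + Δt • ((c - ĉ/2) • L a + (ĉ/2) • L w¹)` for its coefficient pair `(c, ĉ)`. Since
`η = θ + 1/M` and `η̂ = θ̂ + 2θ/M`, the defect of the Euler substep factors as `(Δt/M) • g Δt` with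
`g Δt = L w_{p,0} - L a - θ • (L w¹ - L a)`. Now `g 0 = 0`, and since `w_{p,0}` starts with velocity
`θ • L a`, also `g' 0 = DL(a) (θ • L a) - θ • DL(a) (L a) = 0`; Taylor's theorem for the `C²`
function `g` gives `g = O(Δt²)`, so the defect is `O(Δt³)`.
-/

open Asymptotics Filter Topology Set

section
variable {F : Type*} [NormedAddCommGroup F]

theorem exists_pos_forall_abs_le_of_isBigO_pow {f : ℝ → F} {n : ℕ}
    (h : f =O[𝓝 0] fun t => t ^ n) :
    ∃ C > (0 : ℝ), ∃ δ > (0 : ℝ), ∀ t : ℝ, |t| ≤ δ → ‖f t‖ ≤ C * |t| ^ n := by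
  obtain ⟨C, hC, hCf⟩ := h.exists_pos
  obtain ⟨δ, hδ, hbound⟩ := Metric.nhds_basis_closedBall.eventually_iff.mp hCf.bound
  refine ⟨C, hC, δ, hδ, fun t ht => ?_⟩
  simpa [abs_pow] using hbound (by simpa using ht)

variable [NormedSpace ℝ F]

theorem isBigO_sub_sq_of_hasDerivAt_zero {f : ℝ → F} {x₀ : ℝ} (hf : ContDiff ℝ 2 f)
    (h₀ : f x₀ = 0) (h₁ : HasDerivAt f 0 x₀) : f =O[𝓝 x₀] fun x => (x - x₀) ^ 2 := by
  have htaylor : taylorWithinEval f 2 univ x₀ =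
      fun x => (x - x₀) ^ 2 • ((2 : ℝ)⁻¹ • iteratedDeriv 2 f x₀) := by
    ext x
    norm_num [taylor_within_apply, iteratedDerivWithin_univ, h₀, h₁.deriv, smul_smul, mul_comm]
  have hrem := (taylor_isLittleO_univ (x₀ := x₀) (n := 2) (by exact_mod_cast hf)).isBigO
  rw [htaylor] at hrem
  have hquad := (isBigO_refl (fun x => (x - x₀) ^ 2) (𝓝 x₀)).smul
    (isBigO_const_one ℝ ((2 : ℝ)⁻¹ • iteratedDeriv 2 f x₀) (𝓝 x₀))
  simp only [smul_eq_mul, mul_one] at hquad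
  simpa using hrem.add hquad

end

section
variable {E : Type*} [NormedAddCommGroup E] [NormedSpace ℝ E]

noncomputable def sspPredictor (L : E → E) (a : E) (c chat t : ℝ) : E :=
  a + t • ((c - chat / 2) • L a + (chat / 2) • L (a + t • L a))

theorem stage_combination_eq_sspPredictor (L : E → E) (a : E) (c chat t : ℝ) :
    (1 - c - chat) • a + (c - chat) • (a + t • L a)
      + (2 * chat) • ((3 / 4 : ℝ) • a + (1 / 4 : ℝ) • (a + t • L a) + (t / 4) • L (a + t • L a))
      = sspPredictor L a c chat t := by
  unfold sspPredictor
  module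

theorem sspPredictor_add_smul_sub (L : E → E) (a : E) (θ θhat h t : ℝ) :
    sspPredictor L a θ θhat t + (h * t) • L (sspPredictor L a θ θhat t)
        - sspPredictor L a (θ + h) (θhat + 2 * θ * h) t
      = (h * t) • (L (sspPredictor L a θ θhat t) - L a - θ • (L (a + t • L a) - L a)) := by
  unfold sspPredictor
  module

theorem hasDerivAt_sspPredictor_zero {L : E → E} (hL : Differentiable ℝ L) (a : E) (c chat : ℝ) :
    HasDerivAt (sspPredictor L a c chat) (c • L a) 0 := by
  have hv : DifferentiableAt ℝ
      (fun t : ℝ => (c - chat / 2) • L a + (chat / 2) • L (a + t • L a)) 0 := by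
    fun_prop
  convert ((hasDerivAt_id (0 : ℝ)).smul hv.hasDerivAt).const_add a using 1
  · rfl
  · simp only [id_eq, zero_smul, zero_add, one_smul, add_zero]
    module

theorem sspPredictor_remainder_isBigO {L : E → E} (hL : ContDiff ℝ 2 L) (a : E) (θ θhat : ℝ) :
    (fun t => L (sspPredictor L a θ θhat t) - L a - θ • (L (a + t • L a) - L a))
      =O[𝓝 0] fun t => t ^ 2 := by
  have hLd : Differentiable ℝ L := hL.differentiable two_ne_zero
  have hw : HasDerivAt (fun t : ℝ => a + t • L a) (L a) 0 := by
    simpa using ((hasDerivAt_id (0 : ℝ)).smul_const (L a)).const_add a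
  have hLP := (hLd a).hasFDerivAt.comp_hasDerivAt_of_eq 0
    (hasDerivAt_sspPredictor_zero hLd a θ θhat) (by simp [sspPredictor])
  have hLw := (hLd a).hasFDerivAt.comp_hasDerivAt_of_eq 0 hw (by simp)
  have hderiv : HasDerivAt
      (fun t => L (sspPredictor L a θ θhat t) - L a - θ • (L (a + t • L a) - L a)) 0 0 := by
    convert (hLP.sub_const (L a)).sub ((hLw.sub_const (L a)).const_smul θ) using 1
    · rfl
    · simp
  simpa using isBigO_sub_sq_of_hasDerivAt_zero (by unfold sspPredictor; fun_prop)
    (by simp [sspPredictor]) hderiv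

theorem sspPredictor_defect_isBigO {L : E → E} (hL : ContDiff ℝ 2 L) (a : E) (θ θhat h : ℝ) :
    (fun t => sspPredictor L a θ θhat t + (h * t) • L (sspPredictor L a θ θhat t)
        - sspPredictor L a (θ + h) (θhat + 2 * θ * h) t) =O[𝓝 0] fun t => t ^ 3 := by
  simp_rw [sspPredictor_add_smul_sub]
  have hlin : (fun t : ℝ => h * t) =O[𝓝 0] fun t => t := (isBigO_refl _ _).const_mul_left h
  simpa [pow_succ'] using hlin.smul (sspPredictor_remainder_isBigO hL a θ θhat)

end

theorem third_order_predictor_stage1_consistency_general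
    {E : Type*} [NormedAddCommGroup E] [NormedSpace ℝ E]
    (L : E → E) (hL : ContDiff ℝ 2 L)
    (a : E) (M : ℕ) (p : ℕ)
    (θ θhat η ηhat : ℝ)
    (hθ : θ = (p : ℝ) / M) (hθhat : θhat = (p : ℝ) ^ 2 / (M : ℝ) ^ 2)
    (hη : η = ((p : ℝ) + 1) / M) (hηhat : ηhat = (p : ℝ) * ((p : ℝ) + 2) / (M : ℝ) ^ 2)
    (w1 w2 wp0 wp1 : ℝ → E)
    (hw1 : ∀ Δt : ℝ, w1 Δt = a + Δt • L a)
    (hw2 : ∀ Δt : ℝ, w2 Δt = (3/4 : ℝ) • a + (1/4 : ℝ) • w1 Δt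
      + (Δt / 4) • L (w1 Δt))
    (hwp0 : ∀ Δt : ℝ, wp0 Δt = (1 - θ - θhat) • a + (θ - θhat) • w1 Δt
      + (2 * θhat) • w2 Δt)
    (hwp1 : ∀ Δt : ℝ, wp1 Δt = (1 - η - ηhat) • a + (η - ηhat) • w1 Δt
      + (2 * ηhat) • w2 Δt) :
    ∃ C > (0 : ℝ), ∃ δ > (0 : ℝ), ∀ Δt : ℝ, |Δt| ≤ δ →
      ‖wp0 Δt + (Δt / M) • L (wp0 Δt) - wp1 Δt‖ ≤ C * |Δt| ^ 3 := by
  have hη' : η = θ + (M : ℝ)⁻¹ := by rw [hη, hθ]; ring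
  have hηhat' : ηhat = θhat + 2 * θ * (M : ℝ)⁻¹ := by rw [hηhat, hθhat, hθ]; ring
  have hdefect : (fun Δt => wp0 Δt + (Δt / M) • L (wp0 Δt) - wp1 Δt) =
      fun Δt => sspPredictor L a θ θhat Δt + ((M : ℝ)⁻¹ * Δt) • L (sspPredictor L a θ θhat Δt)
        - sspPredictor L a (θ + (M : ℝ)⁻¹) (θhat + 2 * θ * (M : ℝ)⁻¹) Δt := by
    funext Δt
    rw [hwp0, hwp1, hw2, hw1, stage_combination_eq_sspPredictor, stage_combination_eq_sspPredictor,
      hη', hηhat', div_eq_inv_mul]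
  exact exists_pos_forall_abs_le_of_isBigO_pow
    (hdefect ▸ sspPredictor_defect_isBigO hL a θ θhat (M : ℝ)⁻¹)

/-- Third-order consistency of the stage-0 and stage-1 SSP-RK(3,3) LTS predictors:
with `θ = p/M`, `θ̂ = p²/M²`, `η = (p+1)/M`, `η̂ = p(p+2)/M²`, and predictors built from
the coarse SSP-RK(3,3) stages `w¹(Δt) = a + Δt·L(a)`,
`w²(Δt) = (3/4)·a + (1/4)·w¹ + (Δt/4)·L(w¹)`, applying a forward-Euler substep of size
`Δt/M` to the stage-0 prediction agrees with the stage-1 prediction up to `O(Δt³)`. -/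
theorem third_order_predictor_stage1_consistency
    {E : Type*} [NormedAddCommGroup E] [NormedSpace ℝ E]
    (L : E → E) (hL : ContDiff ℝ 2 L)
    (a : E) (M : ℕ) (hM : 1 ≤ M) (p : ℕ) (hp : p ≤ M - 1)
    (θ θhat η ηhat : ℝ)
    (hθ : θ = (p : ℝ) / M) (hθhat : θhat = (p : ℝ) ^ 2 / (M : ℝ) ^ 2)
    (hη : η = ((p : ℝ) + 1) / M) (hηhat : ηhat = (p : ℝ) * ((p : ℝ) + 2) / (M : ℝ) ^ 2)
    (w1 w2 wp0 wp1 : ℝ → E)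
    (hw1 : ∀ Δt : ℝ, w1 Δt = a + Δt • L a)
    (hw2 : ∀ Δt : ℝ, w2 Δt = (3/4 : ℝ) • a + (1/4 : ℝ) • w1 Δt
      + (Δt / 4) • L (w1 Δt))
    (hwp0 : ∀ Δt : ℝ, wp0 Δt = (1 - θ - θhat) • a + (θ - θhat) • w1 Δt
      + (2 * θhat) • w2 Δt)
    (hwp1 : ∀ Δt : ℝ, wp1 Δt = (1 - η - ηhat) • a + (η - ηhat) • w1 Δt
      + (2 * ηhat) • w2 Δt) :
    ∃ C > (0 : ℝ), ∃ δ > (0 : ℝ), ∀ Δt : ℝ, |Δt| ≤ δ →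
      ‖wp0 Δt + (Δt / M) • L (wp0 Δt) - wp1 Δt‖ ≤ C * |Δt| ^ 3 :=
  third_order_predictor_stage1_consistency_general L hL a M p θ θhat η ηhat hθ hθhat hη hηhat w1 w2
    wp0 wp1 hw1 hw2 hwp0 hwp1
end

section
/- Let E be a real normed vector space, let L : E → E be twice continuously differentiable (ContDiff ℝ 2), let a ∈ E, let M ≥ 1 be an integer and 0 ≤ p ≤ M−1, and set θ = p/M, θ̂ = p²/M², γ = (2p+1)/(2M), γ̂ = (2p²+2p+1)/(2M²). For Δt ∈ ℝ define the SSP-RK(3,3) stages w¹(Δt) = a + Δt·L(a) and w²(Δt) = (3/4)·a + (1/4)·w¹(Δt) + (Δt/4)·L(w¹(Δt)), the stage-0 predictor w_{p,0}(Δt) = (1 − θ − θ̂)·a + (θ − θ̂)·w¹(Δt) + 2θ̂·w²(Δt), the computed substep stage w_{p,1}(Δt) = w_{p,0}(Δt) + (Δt/M)·L(w_{p,0}(Δt)), and the stage-2 predictor w_{p,2}(Δt) = (1 − γ − γ̂)·a + (γ − γ̂)·w¹(Δt) + 2γ̂·w²(Δt). Then there exist constants C > 0 and δ > 0 such that ‖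 (3/4)·w_{p,0}(Δt) + (1/4)·w_{p,1}(Δt) + (Δt/(4M))·L(w_{p,1}(Δt)) − w_{p,2}(Δt) ‖ ≤ C·|Δt|³ for all |Δt| ≤ δ (i.e. the stage-2 prediction is consistent to third order with performing the second SSP-RK(3,3) substep of size Δt/M from the predicted stages). -/
/-!
Every stage is `a + Δt • (…)`, so the defect factors as `Δt • g Δt` with `g` of class `C²`.
The relation `γ = θ + 1/(2M)` makes `g 0 = 0` and `γ̂ = θ̂ + θ/M + 1/(2M²)` makes `g' 0 = 0`
(the first- and second-order conditions of the predictor); two applications of the mean value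
theorem then give `‖g Δt‖ ≤ C Δt²`.
-/

open Metric

theorem exists_norm_le_mul_sq_of_contDiff_two {E : Type*} [NormedAddCommGroup E] [NormedSpace ℝ E]
    {g : ℝ → E} (hg : ContDiff ℝ 2 g) (h0 : g 0 = 0) (h1 : deriv g 0 = 0) :
    ∃ C > 0, ∀ t : ℝ, |t| ≤ 1 → ‖g t‖ ≤ C * t ^ 2 := by
  obtain ⟨K, hK⟩ := (isCompact_closedBall (0 : ℝ) 1).exists_bound_of_continuousOn
    (hg.deriv' (n := 1)).continuous_deriv_one.continuousOn
  refine ⟨max K 1, by positivity, fun t ht => ?_⟩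
  have hball : closedBall (0 : ℝ) |t| ⊆ closedBall 0 1 := closedBall_subset_closedBall ht
  have h0_mem : (0 : ℝ) ∈ closedBall 0 |t| := mem_closedBall_self (abs_nonneg t)
  have hderiv : ∀ s ∈ closedBall (0 : ℝ) |t|, ‖deriv g s‖ ≤ max K 1 * |t| := by
    intro s hs
    have := (convex_closedBall (0 : ℝ) |t|).norm_image_sub_le_of_norm_deriv_le
      (fun x _ => hg.differentiable_deriv_two x)
      (fun x hx => (hK x (hball hx)).trans (le_max_left K 1)) h0_mem hs
    rw [h1, sub_zero, sub_zero] at this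
    exact this.trans (by gcongr; exact mem_closedBall_zero_iff.mp hs)
  have := (convex_closedBall (0 : ℝ) |t|).norm_image_sub_le_of_norm_deriv_le
    (fun x _ => hg.differentiable (by norm_num) x) hderiv h0_mem
    (mem_closedBall_zero_iff.mpr (Real.norm_eq_abs t).le)
  rw [h0, sub_zero, sub_zero, Real.norm_eq_abs] at this
  calc ‖g t‖ ≤ max K 1 * |t| * |t| := this
    _ = max K 1 * t ^ 2 := by rw [mul_assoc, ← sq, sq_abs]

theorem hasDerivAt_const_add_smul_zero {E : Type*} [NormedAddCommGroup E] [NormedSpace ℝ E]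
    (a : E) {c : ℝ → E} {c' : E} (hc : HasDerivAt c c' 0) :
    HasDerivAt (fun t => a + t • c t) (c 0) 0 := by
  simpa using ((hasDerivAt_id (0 : ℝ)).smul hc).const_add a

noncomputable section

namespace SSPRK33

variable {E : Type*} [NormedAddCommGroup E] [NormedSpace ℝ E] (L : E → E) (a : E)

def stage1 (t : ℝ) : E := a + t • L a

def stage2 (t : ℝ) : E :=
  (3/4 : ℝ) • a + (1/4 : ℝ) • stage1 L a t + (t / 4) • L (stage1 L a t)

/-- `w_{p,0}` for the weights `(θ, θ̂)`, `w_{p,2}` for `(γ, γ̂)`. -/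
def predictor (θ θhat t : ℝ) : E :=
  (1 - θ - θhat) • a + (θ - θhat) • stage1 L a t + (2 * θhat) • stage2 L a t

def substage1 (m θ θhat t : ℝ) : E :=
  predictor L a θ θhat t + (t / m) • L (predictor L a θ θhat t)

def stage2Defect (m θ θhat γ γhat t : ℝ) : E :=
  (3/4 : ℝ) • predictor L a θ θhat t + (1/4 : ℝ) • substage1 L a m θ θhat t
    + (t / (4 * m)) • L (substage1 L a m θ θhat t) - predictor L a γ γhat t

def stage2DefectQuotient (m θ θhat γ γhat t : ℝ) : E :=
  (θ - γ - (θhat - γhat) / 2) • L a + ((θhat - γhat) / 2) • L (stage1 L a t)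
    + (1 / (4 * m)) • (L (predictor L a θ θhat t) + L (substage1 L a m θ θhat t))

variable {L a}

theorem predictor_eq (θ θhat t : ℝ) :
    predictor L a θ θhat t = a + t • ((θ - θhat / 2) • L a + (θhat / 2) • L (stage1 L a t)) := by
  simp only [predictor, stage2, stage1]
  module

theorem substage1_eq (m θ θhat t : ℝ) :
    substage1 L a m θ θhat t = a + t • ((θ - θhat / 2) • L a + (θhat / 2) • L (stage1 L a t)
      + (1 / m) • L (predictor L a θ θhat t)) := by
  rw [substage1, predictor_eq]
  module

theorem stage2Defect_eq_smul (m θ θhat γ γhat t : ℝ) :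
    stage2Defect L a m θ θhat γ γhat t = t • stage2DefectQuotient L a m θ θhat γ γhat t := by
  rw [stage2Defect, stage2DefectQuotient, substage1, predictor_eq, predictor_eq]
  module

@[simp] theorem stage1_zero : stage1 L a 0 = a := by simp [stage1]

@[simp] theorem predictor_zero (θ θhat : ℝ) : predictor L a θ θhat 0 = a := by
  simp [predictor_eq]

@[simp] theorem substage1_zero (m θ θhat : ℝ) : substage1 L a m θ θhat 0 = a := by
  simp [substage1_eq]

theorem stage2DefectQuotient_zero (m θ θhat γ γhat : ℝ) :
    stage2DefectQuotient L a m θ θhat γ γhat 0 = (θ - γ + 1 / (2 * m)) • L a := by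
  simp only [stage2DefectQuotient, stage1_zero, predictor_zero, substage1_zero]
  module

theorem hasDerivAt_stage1 (t : ℝ) : HasDerivAt (stage1 L a) (L a) t := by
  unfold stage1
  simpa using ((hasDerivAt_id t).smul_const (L a)).const_add a

variable {L' : E →L[ℝ] E}

theorem hasDerivAt_comp_stage1 (hL : HasFDerivAt L L' a) :
    HasDerivAt (fun t => L (stage1 L a t)) (L' (L a)) 0 :=
  hL.comp_hasDerivAt_of_eq 0 (hasDerivAt_stage1 0) stage1_zero.symm

theorem hasDerivAt_predictor (hL : HasFDerivAt L L' a) (θ θhat : ℝ) :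
    HasDerivAt (predictor L a θ θhat) (θ • L a) 0 := by
  have := hasDerivAt_const_add_smul_zero a
    ((hasDerivAt_const 0 ((θ - θhat / 2) • L a)).add
      ((hasDerivAt_comp_stage1 hL).const_smul (θhat / 2)))
  convert this using 1
  · exact funext (predictor_eq θ θhat)
  · simp only [Pi.add_apply, Pi.smul_apply, stage1_zero]
    module

theorem hasDerivAt_comp_predictor (hL : HasFDerivAt L L' a) (θ θhat : ℝ) :
    HasDerivAt (fun t => L (predictor L a θ θhat t)) (θ • L' (L a)) 0 := by
  simpa [Function.comp_def] using hL.comp_hasDerivAt_of_eq 0 (hasDerivAt_predictor hL θ θhat)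
    (predictor_zero θ θhat).symm

theorem hasDerivAt_substage1 (hL : HasFDerivAt L L' a) (m θ θhat : ℝ) :
    HasDerivAt (substage1 L a m θ θhat) ((θ + 1 / m) • L a) 0 := by
  have := hasDerivAt_const_add_smul_zero a
    (((hasDerivAt_const 0 ((θ - θhat / 2) • L a)).add
      ((hasDerivAt_comp_stage1 hL).const_smul (θhat / 2))).add
      ((hasDerivAt_comp_predictor hL θ θhat).const_smul (1 / m)))
  convert this using 1
  · exact funext (substage1_eq m θ θhat)
  · simp only [Pi.add_apply, Pi.smul_apply, stage1_zero, predictor_zero]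
    module

theorem hasDerivAt_comp_substage1 (hL : HasFDerivAt L L' a) (m θ θhat : ℝ) :
    HasDerivAt (fun t => L (substage1 L a m θ θhat t)) ((θ + 1 / m) • L' (L a)) 0 := by
  simpa [Function.comp_def] using hL.comp_hasDerivAt_of_eq 0 (hasDerivAt_substage1 hL m θ θhat)
    (substage1_zero m θ θhat).symm

theorem hasDerivAt_stage2DefectQuotient (hL : HasFDerivAt L L' a) (m θ θhat γ γhat : ℝ) :
    HasDerivAt (stage2DefectQuotient L a m θ θhat γ γhat)
      (((θhat - γhat) / 2 + (2 * θ + 1 / m) / (4 * m)) • L' (L a)) 0 := by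
  have := ((hasDerivAt_const 0 ((θ - γ - (θhat - γhat) / 2) • L a)).add
    ((hasDerivAt_comp_stage1 hL).const_smul ((θhat - γhat) / 2))).add
    (((hasDerivAt_comp_predictor hL θ θhat).add (hasDerivAt_comp_substage1 hL m θ θhat)).const_smul
      (1 / (4 * m)))
  exact this.congr_deriv (by module)

theorem contDiff_stage2DefectQuotient {n : WithTop ℕ∞} (hL : ContDiff ℝ n L)
    (m θ θhat γ γhat : ℝ) : ContDiff ℝ n (stage2DefectQuotient L a m θ θhat γ γhat) := by
  unfold stage2DefectQuotient substage1 predictor stage2 stage1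
  fun_prop

theorem exists_norm_stage2Defect_le (hL : ContDiff ℝ 2 L) {m θ θhat γ γhat : ℝ}
    (hγ : γ = θ + 1 / (2 * m)) (hγhat : γhat = θhat + θ / m + 1 / (2 * m ^ 2)) :
    ∃ C > 0, ∀ t : ℝ, |t| ≤ 1 → ‖stage2Defect L a m θ θhat γ γhat t‖ ≤ C * |t| ^ 3 := by
  have hquot_zero : stage2DefectQuotient L a m θ θhat γ γhat 0 = 0 := by
    have hcoeff : θ - γ + 1 / (2 * m) = 0 := by rw [hγ]; ring
    rw [stage2DefectQuotient_zero, hcoeff, zero_smul]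
  have hquot_deriv : deriv (stage2DefectQuotient L a m θ θhat γ γhat) 0 = 0 := by
    have hcoeff : (θhat - γhat) / 2 + (2 * θ + 1 / m) / (4 * m) = 0 := by rw [hγhat]; ring
    have hLa : HasFDerivAt L (fderiv ℝ L a) a := (hL.differentiable (by norm_num) a).hasFDerivAt
    rw [(hasDerivAt_stage2DefectQuotient hLa m θ θhat γ γhat).deriv, hcoeff, zero_smul]
  obtain ⟨C, hC, hbound⟩ := exists_norm_le_mul_sq_of_contDiff_two
    (contDiff_stage2DefectQuotient hL m θ θhat γ γhat) hquot_zero hquot_deriv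
  refine ⟨C, hC, fun t ht => ?_⟩
  calc ‖stage2Defect L a m θ θhat γ γhat t‖
      = |t| * ‖stage2DefectQuotient L a m θ θhat γ γhat t‖ := by
        rw [stage2Defect_eq_smul, norm_smul, Real.norm_eq_abs]
    _ ≤ |t| * (C * t ^ 2) := by gcongr; exact hbound t ht
    _ = C * |t| ^ 3 := by rw [← sq_abs t]; ring

end SSPRK33

end

theorem third_order_predictor_stage2_consistency_general
    {E : Type*} [NormedAddCommGroup E] [NormedSpace ℝ E]
    (L : E → E) (hL : ContDiff ℝ 2 L)
    (a : E) (M : ℕ) (p : ℕ)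
    (θ θhat γ γhat : ℝ)
    (hθ : θ = (p : ℝ) / M) (hθhat : θhat = (p : ℝ) ^ 2 / (M : ℝ) ^ 2)
    (hγ : γ = (2 * (p : ℝ) + 1) / (2 * M))
    (hγhat : γhat = (2 * (p : ℝ) ^ 2 + 2 * (p : ℝ) + 1) / (2 * (M : ℝ) ^ 2))
    (w1 w2 wp0 wp1 wp2 : ℝ → E)
    (hw1 : ∀ Δt : ℝ, w1 Δt = a + Δt • L a)
    (hw2 : ∀ Δt : ℝ, w2 Δt = (3/4 : ℝ) • a + (1/4 : ℝ) • w1 Δt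
      + (Δt / 4) • L (w1 Δt))
    (hwp0 : ∀ Δt : ℝ, wp0 Δt = (1 - θ - θhat) • a + (θ - θhat) • w1 Δt
      + (2 * θhat) • w2 Δt)
    (hwp1 : ∀ Δt : ℝ, wp1 Δt = wp0 Δt + (Δt / M) • L (wp0 Δt))
    (hwp2 : ∀ Δt : ℝ, wp2 Δt = (1 - γ - γhat) • a + (γ - γhat) • w1 Δt
      + (2 * γhat) • w2 Δt) :
    ∃ C > (0 : ℝ), ∃ δ > (0 : ℝ), ∀ Δt : ℝ, |Δt| ≤ δ →
      ‖(3/4 : ℝ) • wp0 Δt + (1/4 : ℝ) • wp1 Δt + (Δt / (4 * M)) • L (wp1 Δt)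
        - wp2 Δt‖ ≤ C * |Δt| ^ 3 := by
  obtain rfl : w1 = SSPRK33.stage1 L a := funext hw1
  obtain rfl : w2 = SSPRK33.stage2 L a := funext hw2
  obtain rfl : wp0 = SSPRK33.predictor L a θ θhat := funext hwp0
  obtain rfl : wp1 = SSPRK33.substage1 L a M θ θhat := funext hwp1
  obtain rfl : wp2 = SSPRK33.predictor L a γ γhat := funext hwp2
  have hγ' : γ = θ + 1 / (2 * M) := by rw [hγ, hθ]; ring
  have hγhat' : γhat = θhat + θ / M + 1 / (2 * (M : ℝ) ^ 2) := by rw [hγhat, hθhat, hθ]; ring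
  obtain ⟨C, hC, hbound⟩ := SSPRK33.exists_norm_stage2Defect_le (a := a) hL hγ' hγhat'
  exact ⟨C, hC, 1, one_pos, hbound⟩

/-- Third-order consistency of the stage-2 SSP-RK(3,3) LTS predictor: with `θ = p/M`,
`θ̂ = p²/M²`, `γ = (2p+1)/(2M)`, `γ̂ = (2p²+2p+1)/(2M²)`, coarse stages
`w¹(Δt) = a + Δt·L(a)`, `w²(Δt) = (3/4)·a + (1/4)·w¹ + (Δt/4)·L(w¹)`, stage-0 predictor
`w_{p,0}`, computed substep stage `w_{p,1} = w_{p,0} + (Δt/M)·L(w_{p,0})` and stage-2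
predictor `w_{p,2}`, performing the second SSP-RK(3,3) substep of size `Δt/M` from the
predicted stages agrees with `w_{p,2}` up to `O(Δt³)`. -/
theorem third_order_predictor_stage2_consistency
    {E : Type*} [NormedAddCommGroup E] [NormedSpace ℝ E]
    (L : E → E) (hL : ContDiff ℝ 2 L)
    (a : E) (M : ℕ) (hM : 1 ≤ M) (p : ℕ) (hp : p ≤ M - 1)
    (θ θhat γ γhat : ℝ)
    (hθ : θ = (p : ℝ) / M) (hθhat : θhat = (p : ℝ) ^ 2 / (M : ℝ) ^ 2)
    (hγ : γ = (2 * (p : ℝ) + 1) / (2 * M))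
    (hγhat : γhat = (2 * (p : ℝ) ^ 2 + 2 * (p : ℝ) + 1) / (2 * (M : ℝ) ^ 2))
    (w1 w2 wp0 wp1 wp2 : ℝ → E)
    (hw1 : ∀ Δt : ℝ, w1 Δt = a + Δt • L a)
    (hw2 : ∀ Δt : ℝ, w2 Δt = (3/4 : ℝ) • a + (1/4 : ℝ) • w1 Δt
      + (Δt / 4) • L (w1 Δt))
    (hwp0 : ∀ Δt : ℝ, wp0 Δt = (1 - θ - θhat) • a + (θ - θhat) • w1 Δt
      + (2 * θhat) • w2 Δt)
    (hwp1 : ∀ Δt : ℝ, wp1 Δt = wp0 Δt + (Δt / M) • L (wp0 Δt))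
    (hwp2 : ∀ Δt : ℝ, wp2 Δt = (1 - γ - γhat) • a + (γ - γhat) • w1 Δt
      + (2 * γhat) • w2 Δt) :
    ∃ C > (0 : ℝ), ∃ δ > (0 : ℝ), ∀ Δt : ℝ, |Δt| ≤ δ →
      ‖(3/4 : ℝ) • wp0 Δt + (1/4 : ℝ) • wp1 Δt + (Δt / (4 * M)) • L (wp1 Δt)
        - wp2 Δt‖ ≤ C * |Δt| ^ 3 :=
  third_order_predictor_stage2_consistency_general L hL a M p θ θhat γ γhat hθ hθhat hγ hγhat w1 w2
    wp0 wp1 wp2 hw1 hw2 hwp0 hwp1 hwp2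
end

section
/- Let θ ≥ 0 and let h₁, h₂ be real numbers with h₁ ≥ 0 and h₂ ≤ 0 (the one-sided difference quotients of a monotone numerical flux). Let r_C and r_D be real numbers with −θ ≤ r_C ≤ 1 and −θ ≤ r_D ≤ 1 (the limiter ratios), and define the incremental coefficients C = −h₂·(1 − r_C) and D = h₁·(1 − r_D). Let λ ≥ 0 satisfy the local CFL condition λ·(h₁ − h₂) ≤ 1/(1+θ), and let α, β be real numbers with 0 ≤ α ≤ λ and 0 ≤ β ≤ λ. Then C ≥ 0, D ≥ 0, and α·D + β·C ≤ 1. -/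
/-! Both coefficients are a nonnegative flux quotient times `1 - r` with `r ∈ [-θ, 1]`, so they lie
between `0` and that quotient times `1 + θ`. Hence `α·D + β·C ≤ λ·(D + C) ≤ λ·(h₁ - h₂)·(1 + θ)`,
which is at most `1` by the CFL condition. -/

section IncrementalCoefficients

variable {R : Type*} [Ring R] [PartialOrder R] [IsOrderedRing R]

theorem mul_one_sub_nonneg {a r : R} (ha : 0 ≤ a) (hr : r ≤ 1) : 0 ≤ a * (1 - r) :=
  mul_nonneg ha (sub_nonneg.2 hr)

theorem mul_one_sub_le_mul_one_add {a r θ : R} (ha : 0 ≤ a) (hr : -θ ≤ r) :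
    a * (1 - r) ≤ a * (1 + θ) :=
  mul_le_mul_of_nonneg_left (by rw [sub_eq_add_neg]; gcongr; exact neg_le.1 hr) ha

theorem mul_add_mul_le_mul_add {α β lam D C : R} (hD : 0 ≤ D) (hC : 0 ≤ C)
    (hα : α ≤ lam) (hβ : β ≤ lam) : α * D + β * C ≤ lam * (D + C) := by
  rw [mul_add]
  exact add_le_add (mul_le_mul_of_nonneg_right hα hD) (mul_le_mul_of_nonneg_right hβ hC)

end IncrementalCoefficients

theorem incremental_coefficients_cfl_bound_general
    (θ h₁ h₂ rC rD lam α β : ℝ)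
    (hh₁ : 0 ≤ h₁) (hh₂ : h₂ ≤ 0)
    (hrC₁ : -θ ≤ rC) (hrC₂ : rC ≤ 1)
    (hrD₁ : -θ ≤ rD) (hrD₂ : rD ≤ 1)
    (hlam : 0 ≤ lam) (hCFL : lam * (h₁ - h₂) ≤ 1 / (1 + θ))
    (hα₂ : α ≤ lam) (hβ₂ : β ≤ lam) :
    0 ≤ -h₂ * (1 - rC) ∧ 0 ≤ h₁ * (1 - rD) ∧
      α * (h₁ * (1 - rD)) + β * (-h₂ * (1 - rC)) ≤ 1 := by
  have hh₂' : 0 ≤ -h₂ := neg_nonneg.2 hh₂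
  have hC := mul_one_sub_nonneg hh₂' hrC₂
  have hD := mul_one_sub_nonneg hh₁ hrD₂
  refine ⟨hC, hD, ?_⟩
  have hθ : 0 ≤ 1 + θ := by linarith
  calc α * (h₁ * (1 - rD)) + β * (-h₂ * (1 - rC))
      ≤ lam * (h₁ * (1 - rD) + -h₂ * (1 - rC)) := mul_add_mul_le_mul_add hD hC hα₂ hβ₂
    _ ≤ lam * (h₁ * (1 + θ) + -h₂ * (1 + θ)) := by
      gcongr lam * (?_ + ?_)
      exacts [mul_one_sub_le_mul_one_add hh₁ hrD₁, mul_one_sub_le_mul_one_add hh₂' hrC₁]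
    _ = lam * (h₁ - h₂) * (1 + θ) := by ring
    _ ≤ 1 := mul_le_of_le_div₀ zero_le_one hθ hCFL

/-- Nonnegativity and CFL bound for the Harten incremental coefficients: for a monotone
flux (`h₁ ≥ 0`, `h₂ ≤ 0`), limiter ratios `r_C, r_D ∈ [−θ, 1]`, and local mesh ratio
`λ ≥ 0` with `λ·(h₁ − h₂) ≤ 1/(1+θ)`, the coefficients `C = −h₂·(1 − r_C)` and
`D = h₁·(1 − r_D)` are nonnegative and satisfy `α·D + β·C ≤ 1` whenever
`0 ≤ α ≤ λ` and `0 ≤ β ≤ λ`. -/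
theorem incremental_coefficients_cfl_bound
    (θ h₁ h₂ rC rD lam α β : ℝ)
    (hθ : 0 ≤ θ) (hh₁ : 0 ≤ h₁) (hh₂ : h₂ ≤ 0)
    (hrC₁ : -θ ≤ rC) (hrC₂ : rC ≤ 1)
    (hrD₁ : -θ ≤ rD) (hrD₂ : rD ≤ 1)
    (hlam : 0 ≤ lam) (hCFL : lam * (h₁ - h₂) ≤ 1 / (1 + θ))
    (hα₁ : 0 ≤ α) (hα₂ : α ≤ lam) (hβ₁ : 0 ≤ β) (hβ₂ : β ≤ lam) :
    0 ≤ -h₂ * (1 - rC) ∧ 0 ≤ h₁ * (1 - rD) ∧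
      α * (h₁ * (1 - rD)) + β * (-h₂ * (1 - rC)) ≤ 1 :=
  incremental_coefficients_cfl_bound_general θ h₁ h₂ rC rD lam α β hh₁ hh₂ hrC₁ hrC₂ hrD₁ hrD₂ hlam
    hCFL hα₂ hβ₂
end
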